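/- arXiv:math/0112034 — 2 statements merged into one kernel-verified Lean document; each statement's English description precedes it below -/
import Mathlib

section
/- For all planar binary trees x and y, one has x / y ≤ x \ y in the Tamari order on Y_{deg x + deg y}. -/
/-- A planar binary tree: a leaf `|` or a grafting `x ∨ y`. -/
inductive PBT : Type
  | leaf : PBT
  | node : PBT → PBT → PBT
  deriving DecidableEq

namespace PBT

/-- The degree: number of internal vertices. -/
def deg : PBT → ℕ
  | leaf => 0
  | node l r => deg l + deg r + 1

/-- The set `Y n` of planar binary trees of degree `n`. -/
def Y (n : ℕ) : Set PBT := {t | t.deg = n}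

/-- The `over` operation `x / y`. -/
def overOp : PBT → PBT → PBT
  | x, leaf => x
  | x, node yl yr => node (overOp x yl) yr

/-- The `under` operation `x \ y`. -/
def under : PBT → PBT → PBT
  | leaf, y => y
  | node xl xr, y => node xl (under xr y)

/-- The Tamari order, generated by `(x ∨ y) ∨ z ≤ x ∨ (y ∨ z)` and compatibility
with grafting on both sides. -/
inductive tle : PBT → PBT → Prop
  | refl (x : PBT) : tle x x
  | trans {x y z : PBT} : tle x y → tle y z → tle x z
  | rotate (x y z : PBT) : tle (node (node x y) z) (node x (node y z))
  | node_left {x y : PBT} (z : PBT) : tle x y → tle (node x z) (node y z)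
  | node_right {x y : PBT} (z : PBT) : tle x y → tle (node z x) (node z y)

/-- The sum of two planar binary trees: the Tamari interval `[x/y, x\y]`
(a subset of `Y (deg x + deg y)`). -/
def sum (x y : PBT) : Set PBT := {z | tle (overOp x y) z ∧ tle z (under x y)}

/-- A grove of degree `n`: a nonempty subset of `Y n`. -/
def Grove (n : ℕ) (A : Set PBT) : Prop := A.Nonempty ∧ ∀ x ∈ A, x.deg = n

/-- The sum of groves. -/
def gsum (A B : Set PBT) : Set PBT := ⋃ x ∈ A, ⋃ y ∈ B, sum x y

/-- The reflection involution σ. -/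
def σ : PBT → PBT
  | leaf => leaf
  | node l r => node (σ r) (σ l)

/-- The left sum `x ⊣ y` of trees (with the conventions `x ⊣ | = {x}`, `| ⊣ y = {|}`). -/
def lsum : PBT → PBT → Set PBT
  | x, leaf => {x}
  | leaf, _ => {leaf}
  | node xl xr, y => (fun z => node xl z) '' sum xr y

/-- The right sum `x ⊢ y` of trees (with the conventions `| ⊢ y = {y}`, `x ⊢ | = {|}`). -/
def rsum : PBT → PBT → Set PBT
  | leaf, y => {y}
  | _, leaf => {leaf}
  | x, node yl yr => (fun z => node z yr) '' sum x yl

/-- Left sum of groves. -/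
def glsum (A B : Set PBT) : Set PBT := ⋃ x ∈ A, ⋃ y ∈ B, lsum x y

/-- Right sum of groves. -/
def grsum (A B : Set PBT) : Set PBT := ⋃ x ∈ A, ⋃ y ∈ B, rsum x y

/-- Multiplication of a tree by a grove:
`| × B = {|}` and `(xˡ ∨ xʳ) × B = ((xˡ × B) ⊢ B) ⊣ (xʳ × B)`.
(The conventions `{|} ⊢ B = B` and `A ⊣ {|} = A` are built into `rsum`/`lsum`.) -/
def tmul : PBT → Set PBT → Set PBT
  | leaf, _ => {leaf}
  | node l r, B => glsum (grsum (tmul l B) B) (tmul r B)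

/-- Multiplication of groves. -/
def gmul (A B : Set PBT) : Set PBT := ⋃ x ∈ A, tmul x B

end PBT

/-!
Induct on `y`. For `y = yˡ ∨ yʳ`, `x / y = (x / yˡ) ∨ yʳ ≤ (x \ yˡ) ∨ yʳ ≤ x \ (yˡ ∨ yʳ)`, where
the last step is one rotation for each vertex on the right branch of `x`.
-/

namespace PBT

theorem under_leaf (x : PBT) : x.under leaf = x := by
  induction x with
  | leaf => rfl
  | node l r _ ihr => rw [under, ihr]

theorem node_under_le_under_node (x y z : PBT) :
    tle (node (x.under y) z) (x.under (node y z)) := by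
  induction x with
  | leaf => exact .refl _
  | node xl xr _ ihr => exact (tle.rotate xl (xr.under y) z).trans (ihr.node_right xl)

end PBT

/-- For all planar binary trees `x` and `y`, `x / y ≤ x \ y`
in the Tamari order. -/
theorem over_le_under (x y : PBT) : PBT.tle (x.overOp y) (x.under y) := by
  induction y with
  | leaf => rw [PBT.under_leaf]; exact .refl x
  | node yl yr ihl _ => exact (ihl.node_left yr).trans (PBT.node_under_le_under_node x yl yr)
end

section
/- For all n, m ≥ 0 and every planar binary tree z ∈ Y_{n+m}, there exist unique planar binary trees x ∈ Y_n and y ∈ Y_m such that x/y ≤ z ≤ x\y in the Tamari order. -/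
/-!
Cutting `z` along the path from its root to its `n`-th leaf gives trees `x` of degree `n` and
`y` with `x / y ≤ z ≤ x \ y`. Cutting at a fixed leaf is monotone for the Tamari order, and
cutting `x / y` or `x \ y` at leaf `deg x` gives back `(x, y)`. Hence if `x / y ≤ z ≤ x \ y`,
the cut of `z` at leaf `deg x` lies between `(x, y)` and `(x, y)`, and antisymmetry of the
Tamari order (a rotation strictly lowers a weight) gives uniqueness.
-/

namespace PBT

theorem tle.deg_eq {a b : PBT} (h : tle a b) : a.deg = b.deg := by
  induction h with
  | refl => rfl
  | trans _ _ ih₁ ih₂ => exact ih₁.trans ih₂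
  | rotate => simp only [deg]; omega
  | node_left _ _ ih | node_right _ _ ih => simp only [deg, ih]

theorem deg_overOp (x y : PBT) : (overOp x y).deg = x.deg + y.deg := by
  induction y with
  | leaf => rfl
  | node yl yr ihl _ => simp only [overOp, deg, ihl]; omega

theorem deg_under (x y : PBT) : (under x y).deg = x.deg + y.deg := by
  induction x with
  | leaf => simp only [under, deg, Nat.zero_add]
  | node xl xr _ ihr => simp only [under, deg, ihr]; omega

/-- The rotation `(x ∨ y) ∨ z ≤ x ∨ (y ∨ z)` lowers this weight by `deg x + 1`. -/
def leftWeight : PBT → ℕ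
  | leaf => 0
  | node l r => leftWeight l + leftWeight r + l.deg

theorem tle.eq_or_leftWeight_lt {a b : PBT} (h : tle a b) :
    a = b ∨ b.leftWeight < a.leftWeight := by
  induction h with
  | refl => exact .inl rfl
  | trans _ _ ih₁ ih₂ =>
    rcases ih₁ with rfl | h₁
    · exact ih₂
    · rcases ih₂ with rfl | h₂
      · exact .inr h₁
      · exact .inr (h₂.trans h₁)
  | rotate x y z => right; simp only [leftWeight, deg]; omega
  | node_left z hxy ih =>
    rcases ih with rfl | h
    · exact .inl rfl
    · right; simp only [leftWeight, hxy.deg_eq]; omega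
  | node_right z _ ih =>
    rcases ih with rfl | h
    · exact .inl rfl
    · right; simp only [leftWeight]; omega

theorem tle.antisymm {a b : PBT} (hab : tle a b) (hba : tle b a) : a = b := by
  rcases hab.eq_or_leftWeight_lt with rfl | hlt
  · rfl
  · rcases hba.eq_or_leftWeight_lt with rfl | hlt'
    · rfl
    · omega

theorem overOp_node_tle (x y z : PBT) : tle (overOp (node x y) z) (node x (overOp y z)) := by
  induction z with
  | leaf => exact .refl _
  | node zl zr ihl _ => exact (tle.node_left _ ihl).trans (.rotate _ _ _)

theorem node_under_tle (x y z : PBT) : tle (node (under x y) z) (under x (node y z)) := by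
  induction x with
  | leaf => exact .refl _
  | node xl xr _ ihr => exact (tle.rotate _ _ _).trans (.node_right _ ihr)

/-- `split t i` cuts `t` along the path from the root to its `i`-th leaf (leaves numbered
from `0`, left to right) into the part to the left and the part to the right of that path.
The truncated subtraction `i - l.deg - 1` only occurs when `l.deg < i`. -/
def split : PBT → ℕ → PBT × PBT
  | leaf, _ => (leaf, leaf)
  | node l r, i =>
    if i ≤ l.deg then ((split l i).1, node (split l i).2 r)
    else (node l (split r (i - l.deg - 1)).1, (split r (i - l.deg - 1)).2)

theorem deg_split {t : PBT} {i : ℕ} (hi : i ≤ t.deg) :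
    (split t i).1.deg = i ∧ (split t i).2.deg = t.deg - i := by
  induction t generalizing i with
  | leaf => simp_all only [deg, Nat.le_zero, split, Nat.sub_self, and_self]
  | node l r ihl ihr =>
    by_cases h : i ≤ l.deg
    · have := ihl h
      simp only [split, h, if_true, deg]; omega
    · have := @ihr (i - l.deg - 1) (by simp only [deg] at hi; omega)
      simp only [split, h, if_false, deg]; omega

theorem split_zero (t : PBT) : split t 0 = (leaf, t) := by
  induction t with
  | leaf => rfl
  | node l r ihl _ => simp only [split, Nat.zero_le, if_true, ihl]

theorem split_deg_self (t : PBT) : split t t.deg = (t, leaf) := by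
  induction t with
  | leaf => rfl
  | node l r _ ihr =>
    have hr : l.deg + r.deg + 1 - l.deg - 1 = r.deg := by omega
    simp only [split, deg, show ¬ l.deg + r.deg + 1 ≤ l.deg by omega, if_false, hr, ihr]

theorem split_overOp (x y : PBT) : split (overOp x y) x.deg = (x, y) := by
  induction y with
  | leaf => exact split_deg_self x
  | node yl yr ihl _ =>
    have h : x.deg ≤ (overOp x yl).deg := by rw [deg_overOp]; omega
    simp only [overOp, split, h, if_true, ihl]

theorem split_under (x y : PBT) : split (under x y) x.deg = (x, y) := by
  induction x with
  | leaf => exact split_zero y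
  | node xl xr _ ihr =>
    have hr : xl.deg + xr.deg + 1 - xl.deg - 1 = xr.deg := by omega
    simp only [under, split, deg, show ¬ xl.deg + xr.deg + 1 ≤ xl.deg by omega, if_false, hr,
      ihr]

theorem mem_sum_split (z : PBT) {i : ℕ} (hi : i ≤ z.deg) :
    z ∈ sum (split z i).1 (split z i).2 := by
  induction z generalizing i with
  | leaf => exact ⟨.refl _, .refl _⟩
  | node l r ihl ihr =>
    by_cases h : i ≤ l.deg
    · obtain ⟨hlo, hhi⟩ := ihl h
      simp only [sum, Set.mem_ofPred_eq, split, h, if_true]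
      exact ⟨tle.node_left r hlo, (tle.node_left r hhi).trans (node_under_tle _ _ _)⟩
    · obtain ⟨hlo, hhi⟩ := @ihr (i - l.deg - 1) (by simp only [deg] at hi; omega)
      simp only [sum, Set.mem_ofPred_eq, split, h, if_false]
      exact ⟨(overOp_node_tle _ _ _).trans (tle.node_right l hlo), tle.node_right l hhi⟩

theorem tle.split {a b : PBT} (h : tle a b) (i : ℕ) :
    tle (split a i).1 (split b i).1 ∧ tle (split a i).2 (split b i).2 := by
  induction h generalizing i with
  | refl => exact ⟨.refl _, .refl _⟩
  | trans _ _ ih₁ ih₂ => exact ⟨(ih₁ i).1.trans (ih₂ i).1, (ih₁ i).2.trans (ih₂ i).2⟩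
  | rotate x y z =>
    by_cases h₁ : i ≤ x.deg
    · simp only [PBT.split, deg, h₁, show i ≤ x.deg + y.deg + 1 by omega, if_true]
      exact ⟨.refl _, .rotate _ _ _⟩
    by_cases h₂ : i ≤ x.deg + y.deg + 1
    · simp only [PBT.split, deg, h₁, h₂, show i - x.deg - 1 ≤ y.deg by omega, if_true,
        if_false]
      exact ⟨.refl _, .refl _⟩
    · have hsub : i - (x.deg + y.deg + 1) - 1 = i - x.deg - 1 - y.deg - 1 := by omega
      simp only [PBT.split, deg, h₁, h₂, show ¬ i - x.deg - 1 ≤ y.deg by omega, if_false, hsub]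
      exact ⟨.rotate _ _ _, .refl _⟩
  | @node_left x y z hxy ih =>
    by_cases h : i ≤ x.deg
    · simp only [PBT.split, h, ← hxy.deg_eq, if_true]
      exact ⟨(ih i).1, .node_left _ (ih i).2⟩
    · simp only [PBT.split, h, ← hxy.deg_eq, if_false]
      exact ⟨.node_left _ hxy, .refl _⟩
  | @node_right x y z hxy ih =>
    by_cases h : i ≤ z.deg
    · simp only [PBT.split, h, if_true]
      exact ⟨.refl _, .node_right _ hxy⟩
    · simp only [PBT.split, h, if_false]
      exact ⟨.node_right _ (ih _).1, (ih _).2⟩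

theorem split_of_mem_sum {x y z : PBT} (hz : z ∈ sum x y) : split z x.deg = (x, y) := by
  obtain ⟨hlo, hhi⟩ := hz
  have hsplit_lo := hlo.split x.deg
  have hsplit_hi := hhi.split x.deg
  rw [split_overOp] at hsplit_lo
  rw [split_under] at hsplit_hi
  exact Prod.ext (hsplit_hi.1.antisymm hsplit_lo.1) (hsplit_hi.2.antisymm hsplit_lo.2)

end PBT

open PBT in
/-- for every `z ∈ Y_{n+m}` there are unique `x ∈ Y_n`, `y ∈ Y_m`
with `x/y ≤ z ≤ x\y`. -/
theorem exists_unique_interval (n m : ℕ) (z : PBT) (hz : z ∈ Y (n + m)) :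
    ∃! p : PBT × PBT, p.1 ∈ Y n ∧ p.2 ∈ Y m ∧
      tle (p.1.overOp p.2) z ∧ tle z (p.1.under p.2) := by
  have hzdeg : z.deg = n + m := hz
  obtain ⟨hdeg₁, hdeg₂⟩ := deg_split (show n ≤ z.deg by omega)
  refine ⟨split z n, ⟨hdeg₁, by simp only [Y, Set.mem_ofPred_eq]; omega,
    mem_sum_split z (by omega)⟩, ?_⟩
  rintro ⟨x, y⟩ ⟨rfl, -, hmem⟩
  exact (split_of_mem_sum hmem).symm
end
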